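/- Fix real constants σ and n. Let τ > 0, h > 0, let u ∈ ℝ and û, û₊, û₋ > 0 satisfy the implicit difference scheme (û - u)/τ = (1/h²)·( û₊^{σ+1} − 2û^{σ+1} + û₋^{σ+1} ) + ûⁿ. Then for every λ > 0 the scaled values τ* = λ^{2(n-1)}τ, h* = λ^{n-σ-1}h, u* = λ⁻²u, û* = λ⁻²û, û₊* = λ⁻²û₊, û₋* = λ⁻²û₋ satisfy the same scheme. That is, the implicit scheme is invariant under the scaling group generated by X₃ = 2(n-1)t∂/∂t + (n-σ-1)x∂/∂x − 2u∂/∂u. -/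
import Mathlib


open Real

/-- The implicit difference scheme
`(û − u)/τ = (1/h²)(û₊^{σ+1} − 2û^{σ+1} + û₋^{σ+1}) + ûⁿ`
for the PDE `u_t = (u^{σ+1})_{xx} + uⁿ` is invariant under the scaling group
generated by `X₃ = 2(n−1)t∂_t + (n−σ−1)x∂_x − 2u∂_u`:
`τ ↦ λ^{2(n−1)}τ`, `h ↦ λ^{n−σ−1}h`, `u ↦ λ⁻²u`. -/
theorem implicit_scheme_nonlinear_heat_scaling_invariant
    (σ n : ℝ) (τ h u uh uhp uhm : ℝ) (hτ : 0 < τ) (hh : 0 < h)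
    (huh : 0 < uh) (huhp : 0 < uhp) (huhm : 0 < uhm)
    (hscheme : (uh - u) / τ
      = (1 / h ^ 2) * (uhp ^ (σ + 1) - 2 * uh ^ (σ + 1) + uhm ^ (σ + 1)) + uh ^ n)
    (lam : ℝ) (hlam : 0 < lam) :
    (lam ^ (-2 : ℝ) * uh - lam ^ (-2 : ℝ) * u) / (lam ^ (2 * (n - 1)) * τ)
      = (1 / (lam ^ (n - σ - 1) * h) ^ 2)
          * ((lam ^ (-2 : ℝ) * uhp) ^ (σ + 1) - 2 * (lam ^ (-2 : ℝ) * uh) ^ (σ + 1)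
              + (lam ^ (-2 : ℝ) * uhm) ^ (σ + 1))
        + (lam ^ (-2 : ℝ) * uh) ^ n := by
  have hl : (0:ℝ) ≤ lam := hlam.le
  have e1 : ∀ x : ℝ, 0 < x → ∀ s : ℝ,
      (lam ^ (-2 : ℝ) * x) ^ s = lam ^ ((-2) * s) * x ^ s := by
    intro x hx s
    rw [Real.mul_rpow (Real.rpow_nonneg hl _) hx.le, ← Real.rpow_mul hl]
  have e2 : (lam ^ (n - σ - 1) * h) ^ 2 = lam ^ ((n - σ - 1) * 2) * h ^ 2 := by
    rw [mul_pow, ← Real.rpow_natCast (lam ^ (n - σ - 1)) 2, ← Real.rpow_mul hl]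
    norm_num
  rw [e1 uhp huhp, e1 uh huh (σ + 1), e1 uhm huhm, e1 uh huh n, e2]
  have hQ : (0:ℝ) < lam ^ (2 * (n - 1)) := Real.rpow_pos_of_pos hlam _
  have hR : (0:ℝ) < lam ^ ((n - σ - 1) * 2) := Real.rpow_pos_of_pos hlam _
  have hP : lam ^ (-2 : ℝ) = lam ^ ((-2) * n) * lam ^ (2 * (n - 1)) := by
    rw [← Real.rpow_add hlam]; ring_nf
  have hS : lam ^ ((-2) * (σ + 1)) = lam ^ ((-2) * n) * lam ^ ((n - σ - 1) * 2) := by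
    rw [← Real.rpow_add hlam]; ring_nf
  have lhs_eq : (lam ^ (-2 : ℝ) * uh - lam ^ (-2 : ℝ) * u) / (lam ^ (2 * (n - 1)) * τ)
      = lam ^ ((-2) * n) * ((uh - u) / τ) := by
    rw [hP]; field_simp
  rw [lhs_eq, hS, hscheme]
  field_simp
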